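/- Recurrence for minimal embedding lengths into periodic words: let v be a nonempty word over Σ and let x, y be words all of whose letters occur in v. For a word z whose letters occur in v, write N(z,v) for the least m ∈ ℕ such that z is a subword of the length-m prefix of the infinite periodic word v·v·v⋯ (such m exists). Let j = N(x,v) mod |v|. Then N(x·y, v) = N(x,v) + N(y, v_{(j)}), where v_{(j)} denotes the cyclic shift of v by j positions. -/

import Mathlib

/-!
Past its first `a` letters, the periodic word `v·v·v⋯` continues as the periodic word of the
cyclic shift `v.rotate a` (which is `v_{(a mod |v|)}`). So an embedding of `x` into the first
`N(x,v)` letters followed by an embedding of `y` into the shifted word gives `≤`. Conversely,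
in an embedding of `x·y` the part of the prefix carrying `x` has length at least `N(x,v)`, so
`y` embeds into what follows the first `N(x,v)` letters, which gives `≥`.
-/

open List
/-- `wpow u k` is the word `u` concatenated `k` times. -/
def wpow {β : Type*} (u : List β) (k : ℕ) : List β := (List.replicate k u).flatten

/-- Auxiliary residual operation, working on reversed words. -/
def resAux {α : Type*} [DecidableEq α] : List α → List α → List α
  | xr, [] => xr
  | [], _ :: _ => []
  | a :: xr, b :: vr => if a = b then resAux xr vr else resAux (a :: xr) vr
termination_by xr vr => vr.length

/-- The residual `x / v`: the prefix of `x` obtained by removing from `x`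
its longest suffix that is a subword of `v`. -/
def res {α : Type*} [DecidableEq α] (x v : List α) : List α :=
  (resAux x.reverse v.reverse).reverse

inductive Act (α : Type*) where
  | write : List α → Act α
  | read : List α → Act α

/-- written part -/
def wri {α : Type*} : List (Act α) → List α
  | [] => []
  | Act.write w :: σ => w ++ wri σ
  | Act.read _ :: σ => wri σ

/-- read part -/
def rea {α : Type*} : List (Act α) → List α
  | [] => []
  | Act.write _ :: σ => rea σ
  | Act.read w :: σ => w ++ rea σ

/-- `pr σ x` : minimal `σ`-predecessor of `x` (processing `σ` right-to-left). -/
def pr {α : Type*} [DecidableEq α] : List (Act α) → List α → List α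
  | [], x => x
  | Act.write v :: σ, x => res (pr σ x) v
  | Act.read u :: σ, x => u ++ pr σ x

/-- lossy step for a single channel action -/
def stepAct {α : Type*} : Act α → List α → List α → Prop
  | Act.write w, x, y => y <+ x ++ w
  | Act.read w, x, y => w ++ y <+ x

/-- lossy steps along a sequence of channel actions -/
def steps {α : Type*} : List (Act α) → List α → List α → Prop
  | [], x, y => x = y
  | θ :: σ, x, y => ∃ z, stepAct θ x z ∧ steps σ z y

/-- `w` is a fractional power of `u` -/
def FracPow {α : Type*} (u w : List α) : Prop := ∃ k : ℕ, w <+: wpow u k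

/-- `x ⊖ u` : remainder of `x` after reading the leftmost embedding of `u`. -/
def ominus {α : Type*} [DecidableEq α] : List α → List α → List α
  | x, [] => x
  | [], _ :: _ => []
  | a :: x, b :: u => if a = b then ominus x u else ominus x (b :: u)

/-- `σ` is increasing -/
def Increasing {α : Type*} (σ : List (Act α)) : Prop :=
  0 < (wri σ).length ∧
    wpow (rea σ) (wri σ).length <+ wpow (wri σ) ((wri σ).length - 1)


/-- The length-`m` prefix of the infinite periodic word `v·v·v⋯`. -/
def perPrefix {α : Type*} (v : List α) (m : ℕ) : List α := (wpow v m).take m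

/-- `Nemb z v`: the least `m` such that `z` is a subword of the length-`m`
prefix of the infinite periodic word `v·v·v⋯`. -/
noncomputable def Nemb {α : Type*} [DecidableEq α] (z v : List α) : ℕ :=
  sInf {m : ℕ | z <+ perPrefix v m}

namespace List

variable {α : Type*}

theorem sublist_drop_of_append_sublist {x y l : List α} {n : ℕ} (h : x ++ y <+ l)
    (hn : ∀ k, x <+ l.take k → n ≤ k) : y <+ l.drop n := by
  obtain ⟨l₁, l₂, rfl, hx, hy⟩ := append_sublist_iff.mp h
  have hnl₁ : n ≤ l₁.length := hn _ (by rwa [take_left])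
  calc y <+ l₂ := hy
    _ = (l₁ ++ l₂).drop l₁.length := drop_left.symm
    _ <+ (l₁ ++ l₂).drop n := drop_sublist_drop_left _ hnl₁

end List

section PeriodicPrefix

variable {α : Type*} {v : List α}

theorem wpow_succ (v : List α) (k : ℕ) : wpow v (k + 1) = v ++ wpow v k := by
  simp [wpow, List.replicate_succ]

theorem length_wpow (v : List α) (k : ℕ) : (wpow v k).length = k * v.length := by
  induction k with
  | zero => simp [wpow]
  | succ k ih => rw [wpow_succ, List.length_append, ih]; ring

theorem sublist_wpow_length {z : List α} (hz : z ⊆ v) : z <+ wpow v z.length := by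
  induction z with
  | nil => simp
  | cons a z ih =>
    rw [List.length_cons, wpow_succ]
    exact (List.singleton_sublist.mpr (hz List.mem_cons_self)).append
      (ih (List.subset_of_cons_subset hz))

theorem getElem_wpow (hv : v ≠ []) (k i : ℕ) (h : i < (wpow v k).length) :
    (wpow v k)[i] = v[i % v.length]'(Nat.mod_lt _ (List.length_pos_iff.mpr hv)) := by
  induction k generalizing i with
  | zero => simp [wpow] at h
  | succ k ih =>
    simp only [List.getElem_of_eq (wpow_succ v k) h]
    rcases lt_or_ge i v.length with hi | hi
    · simp only [List.getElem_append_left hi, Nat.mod_eq_of_lt hi]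
    · have hik : i - v.length < (wpow v k).length := by
        simp only [wpow_succ, List.length_append] at h; omega
      simp only [List.getElem_append_right hi, ih _ hik, ← Nat.mod_eq_sub_mod hi]

theorem length_perPrefix (hv : v ≠ []) (m : ℕ) : (perPrefix v m).length = m := by
  have hlen : 0 < v.length := List.length_pos_iff.mpr hv
  simp only [perPrefix, List.length_take, length_wpow]
  exact min_eq_left (Nat.le_mul_of_pos_right m hlen)

theorem getElem_perPrefix (hv : v ≠ []) (m i : ℕ) (h : i < (perPrefix v m).length) :
    (perPrefix v m)[i] = v[i % v.length]'(Nat.mod_lt _ (List.length_pos_iff.mpr hv)) := by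
  simp only [perPrefix, List.getElem_take, getElem_wpow hv]

theorem perPrefix_mul_length (hv : v ≠ []) (k : ℕ) :
    perPrefix v (k * v.length) = wpow v k :=
  List.ext_getElem (by rw [length_perPrefix hv, length_wpow]) fun i _ _ => by
    rw [getElem_perPrefix hv, getElem_wpow hv]

theorem take_perPrefix (hv : v ≠ []) (k n : ℕ) :
    (perPrefix v n).take k = perPrefix v (min k n) :=
  List.ext_getElem (by simp only [List.length_take, length_perPrefix hv]) fun i _ _ => by
    rw [List.getElem_take, getElem_perPrefix hv, getElem_perPrefix hv]

theorem drop_perPrefix (hv : v ≠ []) (a n : ℕ) :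
    (perPrefix v n).drop a = perPrefix (v.rotate a) (n - a) := by
  have hrot : v.rotate a ≠ [] := by simpa using hv
  refine List.ext_getElem (by simp only [List.length_drop, length_perPrefix hv,
    length_perPrefix hrot]) fun i _ _ => ?_
  simp only [List.getElem_drop, getElem_perPrefix hv, getElem_perPrefix hrot,
    List.getElem_rotate, List.length_rotate, Nat.mod_add_mod, Nat.add_comm a i]

theorem perPrefix_add (hv : v ≠ []) (a n : ℕ) :
    perPrefix v (a + n) = perPrefix v a ++ perPrefix (v.rotate a) n := by
  rw [← List.take_append_drop a (perPrefix v (a + n)), take_perPrefix hv,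
    drop_perPrefix hv, min_eq_left (Nat.le_add_right a n), Nat.add_sub_cancel_left]

end PeriodicPrefix

section MinimalEmbedding

variable {α : Type*} [DecidableEq α] {v z : List α}

theorem Nemb_le {m : ℕ} (h : z <+ perPrefix v m) : Nemb z v ≤ m :=
  Nat.sInf_le h

theorem sublist_perPrefix_Nemb (hv : v ≠ []) (hz : z ⊆ v) : z <+ perPrefix v (Nemb z v) := by
  have hmem : z <+ perPrefix v (z.length * v.length) := by
    rw [perPrefix_mul_length hv]; exact sublist_wpow_length hz
  exact Nat.sInf_mem (s := {m | z <+ perPrefix v m}) ⟨_, hmem⟩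

end MinimalEmbedding

/-- recurrence for minimal embedding lengths into periodic words:
`N(x·y, v) = N(x,v) + N(y, v_{(j)})` where `j = N(x,v) mod |v|`. -/
theorem Nemb_append {α : Type*} [DecidableEq α]
    (v x y : List α) (hv : v ≠ [])
    (hx : ∀ c ∈ x, c ∈ v) (hy : ∀ c ∈ y, c ∈ v) :
    Nemb (x ++ y) v =
      Nemb x v +
        Nemb y (v.drop (Nemb x v % v.length) ++ v.take (Nemb x v % v.length)) := by
  rw [← List.rotate_eq_drop_append_take_mod]
  set n := Nemb x v
  set N := Nemb (x ++ y) v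
  have hxn : x <+ perPrefix v n := sublist_perPrefix_Nemb hv hx
  have hxyN : x ++ y <+ perPrefix v N := sublist_perPrefix_Nemb hv (List.append_subset.2 ⟨hx, hy⟩)
  refine le_antisymm ?_ ?_
  · have hy' : y <+ perPrefix (v.rotate n) (Nemb y (v.rotate n)) :=
      sublist_perPrefix_Nemb (by simpa using hv) fun c hc => List.mem_rotate.2 (hy c hc)
    exact Nemb_le (perPrefix_add hv n _ ▸ hxn.append hy')
  · have hnN : n ≤ N := Nemb_le ((List.sublist_append_left x y).trans hxyN)
    have hyN : y <+ perPrefix (v.rotate n) (N - n) := by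
      rw [← drop_perPrefix hv]
      refine List.sublist_drop_of_append_sublist hxyN fun k hk => ?_
      rw [take_perPrefix hv] at hk
      exact (Nemb_le hk).trans (min_le_left k N)
    have hNemb_y := Nemb_le hyN
    omega
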